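/- Let m be a lawful monad, let A and B have decidable equality, and let bx be a transparent well-behaved bx over m with state S between A and B, with data readL, readR, setL, setR. For sigA : A → m PUnit and sigB : B → m PUnit define setL' a' := do let a ← gets readL; setL a'; monadLift (if a ≠ a' then sigA a' else pure ⟨⟩) and setR' b' := do let b ← gets readR; setR b'; monadLift (if b ≠ b' then sigB b' else pure ⟨⟩). Then the bx with operations (gets readL, setL', gets readR, setR') is again transparent well-behaved: it satisfies (S_LG_L) (do setL' a; gets readL) = (do setL' a; pure a) for all a : A; (G_LS_L) (do let a ← gets readL; setL' a) = pure ⟨⟩; and the dual laws (S_RG_R) (do setR' b; gets readR) = (do setR' b; pure b) for all b : B and (G_RS_R) (do let b ← gets readR; setR' b) = pure ⟨⟩. -/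

import Mathlib

/-!
The signal is the lift of an action of `m`, which leaves the state untouched and therefore
commutes with reading it; so reading after `sigSet` sees what reading after the plain set
sees. Setting the view that was just read changes nothing, so no signal is sent and
`sigSet` collapses to the plain set.
-/

universe u v

def getsS {m : Type u → Type v} [Monad m] {σ α : Type u} (f : σ → α) : StateT σ m α := do
  let s ← get
  pure (f s)

/-- The signalling set operation: set, and signal if the view actually changed. -/
def sigSet {m : Type u → Type v} [Monad m] {S A : Type u} [DecidableEq A]
    (readL : S → A) (setL : A → StateT S m PUnit) (sigA : A → m PUnit) (a' : A) :
    StateT S m PUnit := do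
  let a ← getsS (m := m) readL
  setL a'
  monadLift (if a ≠ a' then sigA a' else pure PUnit.unit)

section

variable {m : Type u → Type v} [Monad m] [LawfulMonad m] {σ α β : Type u}

theorem getsS_bind_getsS (f : σ → α) (k : α → α → StateT σ m β) :
    (do let a ← getsS f; let a' ← getsS f; k a a') = (do let a ← getsS f; k a a) := by
  ext s
  simp [getsS]

theorem monadLift_bind_getsS (n : m α) (f : σ → β) :
    (do let _ ← (monadLift n : StateT σ m α); getsS f) =
      (do let b ← getsS f; let _ ← (monadLift n : StateT σ m α); pure b) := by
  ext s
  simp [getsS]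

variable (read : σ → α) (set : α → StateT σ m PUnit)

theorem bind_monadLift_bind_getsS
    (hset_get : ∀ a, (do set a; getsS (m := m) read) = (do set a; pure a))
    (a : α) (t : m PUnit) :
    (do set a; monadLift t; getsS read) = (do set a; monadLift t; pure a) := by
  calc (do set a; monadLift t; getsS read)
      = (do let b ← (do set a; getsS read); monadLift t; pure b) := by
        simp only [monadLift_bind_getsS, bind_assoc]
    _ = _ := by simp only [hset_get, bind_assoc, pure_bind]

variable [DecidableEq α] (sig : α → m PUnit)

theorem sigSet_bind_getsS
    (hset_get : ∀ a, (do set a; getsS (m := m) read) = (do set a; pure a)) (a : α) :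
    (do sigSet read set sig a; getsS (m := m) read) = (do sigSet read set sig a; pure a) := by
  simp only [sigSet, bind_assoc, bind_monadLift_bind_getsS read set hset_get]

theorem getsS_bind_sigSet
    (hget_set : (do let a ← getsS (m := m) read; set a) = pure PUnit.unit) :
    (do let a ← getsS (m := m) read; sigSet read set sig a) = pure PUnit.unit := by
  simp only [sigSet, getsS_bind_getsS, ne_eq, not_true_eq_false, if_false, monadLift_pure,
    bind_pure_unit, hget_set]

end

theorem signal_bx_wellBehaved
    {m : Type u → Type v} [Monad m] [LawfulMonad m] {S A B : Type u}
    [DecidableEq A] [DecidableEq B]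
    (readL : S → A) (readR : S → B)
    (setL : A → StateT S m PUnit) (setR : B → StateT S m PUnit)
    (sigA : A → m PUnit) (sigB : B → m PUnit)
    (slgl : ∀ a : A, (do setL a; getsS (m := m) readL) = (do setL a; pure a))
    (glsl : (do let a ← getsS (m := m) readL; setL a) = (pure PUnit.unit : StateT S m PUnit))
    (srgr : ∀ b : B, (do setR b; getsS (m := m) readR) = (do setR b; pure b))
    (grsr : (do let b ← getsS (m := m) readR; setR b) = (pure PUnit.unit : StateT S m PUnit)) :
    (∀ a : A,
      (do sigSet readL setL sigA a; getsS (m := m) readL) =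
      (do sigSet readL setL sigA a; pure a)) ∧
    ((do let a ← getsS (m := m) readL; sigSet readL setL sigA a) =
      (pure PUnit.unit : StateT S m PUnit)) ∧
    (∀ b : B,
      (do sigSet readR setR sigB b; getsS (m := m) readR) =
      (do sigSet readR setR sigB b; pure b)) ∧
    ((do let b ← getsS (m := m) readR; sigSet readR setR sigB b) =
      (pure PUnit.unit : StateT S m PUnit)) := by
  exact ⟨sigSet_bind_getsS readL setL sigA slgl, getsS_bind_sigSet readL setL sigA glsl,
    sigSet_bind_getsS readR setR sigB srgr, getsS_bind_sigSet readR setR sigB grsr⟩
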